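/- There exists a constant c such that for every m larger than c there exists a (simple, undirected) graph G on m vertices satisfying: (1) every vertex of G has degree at most m^(1/4.9); and (2) for every two disjoint subsets U_1, U_2 of the vertex set with |U_1| ≥ m^0.999/2 and |U_2| ≥ m^0.999/2 there exists an edge of G with one end in U_1 and the other in U_2. -/

import Mathlib

open scoped Classical

namespace NBPPaper

/-! ### Literals and assignments.
A literal is a pair `(x, b)` of a variable and a polarity (`true` = positive literal).
A set of literals is a `Finset (Var × Bool)`. -/

/-- A set of literals is consistent: no variable occurs both positively and negatively. -/
def Consistent {Var : Type} (S : Finset (Var × Bool)) : Prop :=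
  ∀ x : Var, ¬((x, true) ∈ S ∧ (x, false) ∈ S)

/-- `S` is a set of literals over the variable set `W`. -/
def LitsOver {Var : Type} (W : Finset Var) (S : Finset (Var × Bool)) : Prop :=
  Consistent S ∧ ∀ l ∈ S, l.1 ∈ W

/-- `S` is an assignment of exactly the variables of `W`:
it contains exactly one literal of each variable of `W` and nothing else. -/
def AssignsExactly {Var : Type} (W : Finset Var) (S : Finset (Var × Bool)) : Prop :=
  (∀ l ∈ S, l.1 ∈ W) ∧ ∀ x ∈ W, ∃! b : Bool, (x, b) ∈ S

/-- Satisfaction of a CNF, given as a set of clauses (each clause a set of literals):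
every clause contains a literal of `S`. -/
def SatCNF {V : Type} (φ : Set (Finset (V × Bool))) (S : Finset (V × Bool)) : Prop :=
  ∀ C ∈ φ, ∃ l ∈ C, l ∈ S

/-! ### Nondeterministic branching programs -/

/-- An edge of a nondeterministic branching program over variable type `Var`
with vertex set `Fin n`.  `lab = none` means the edge is unlabelled; the field
`id` allows parallel edges (multigraph). -/
structure NBPEdge (Var : Type) (n : ℕ) where
  src : Fin n
  dst : Fin n
  lab : Option (Var × Bool)
  id : ℕ
deriving DecidableEq

/-- A nondeterministic branching program: a finite DAG (the vertices `Fin n` are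
listed in a topological order, i.e. every edge increases the index) with a single
source (the only vertex with no incoming edge) and a single sink (the only vertex
with no outgoing edge). -/
structure NBP (Var : Type) where
  n : ℕ
  edges : Finset (NBPEdge Var n)
  source : Fin n
  sink : Fin n
  acyc : ∀ e ∈ edges, e.src < e.dst
  source_no_in : ∀ e ∈ edges, e.dst ≠ source
  sink_no_out : ∀ e ∈ edges, e.src ≠ sink
  only_source : ∀ v : Fin n, v ≠ source → ∃ e ∈ edges, e.dst = v
  only_sink : ∀ v : Fin n, v ≠ sink → ∃ e ∈ edges, e.src = v

variable {Var : Type}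

/-- The set of literals labelling the edges of a path (a list of edges). -/
def pathLits [DecidableEq Var] {n : ℕ} (p : List (NBPEdge Var n)) : Finset (Var × Bool) :=
  (p.filterMap NBPEdge.lab).toFinset

/-- The set of variables occurring (as edge labels) on a path. -/
def pathVars [DecidableEq Var] {n : ℕ} (p : List (NBPEdge Var n)) : Finset Var :=
  ((p.filterMap NBPEdge.lab).map Prod.fst).toFinset

/-- The set of vertices visited by a path. -/
def pathVertices {n : ℕ} (p : List (NBPEdge Var n)) : Finset (Fin n) :=
  (p.map NBPEdge.src).toFinset ∪ (p.map NBPEdge.dst).toFinset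

/-- The number of occurrences of the variable `x` as an edge label on the path `p`. -/
def occCount [DecidableEq Var] {n : ℕ} (x : Var) (p : List (NBPEdge Var n)) : ℕ :=
  (p.filterMap NBPEdge.lab).countP (fun l => decide (l.1 = x))

namespace NBP

/-- `p` is a directed path of `Z` from vertex `u` to vertex `v`. -/
def IsPathFrom (Z : NBP Var) (u v : Fin Z.n) (p : List (NBPEdge Var Z.n)) : Prop :=
  p ≠ [] ∧ (∀ e ∈ p, e ∈ Z.edges) ∧ List.Chain' (fun e f => e.dst = f.src) p ∧
    p.head?.map NBPEdge.src = some u ∧ p.getLast?.map NBPEdge.dst = some v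

/-- `p` is a source-sink path of `Z`. -/
def IsSourceSink (Z : NBP Var) (p : List (NBPEdge Var Z.n)) : Prop :=
  Z.IsPathFrom Z.source Z.sink p

/-- A computational path: a source-sink path carrying no two opposite literals. -/
def IsCompPath [DecidableEq Var] (Z : NBP Var) (p : List (NBPEdge Var Z.n)) : Prop :=
  Z.IsSourceSink p ∧ Consistent (pathLits p)

/-- The set `Vars(Z)` of variables whose literals occur on edges of `Z`. -/
def vars [DecidableEq Var] (Z : NBP Var) : Finset Var :=
  Z.edges.biUnion (fun e => (e.lab.map Prod.fst).toFinset)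

/-- `Z` is a (syntactic) read-`d`-times NBP. -/
def ReadTimes [DecidableEq Var] (Z : NBP Var) (d : ℕ) : Prop :=
  ∀ p, Z.IsSourceSink p → ∀ x : Var, occCount x p ≤ d

/-- `Z` is a uniform read-`d`-times NBP: every variable of `Z` occurs exactly `d`
times on every source-sink path. -/
def UniformReadTimes [DecidableEq Var] (Z : NBP Var) (d : ℕ) : Prop :=
  Z.ReadTimes d ∧ ∀ p, Z.IsSourceSink p → ∀ x ∈ Z.vars, occCount x p = d

/-- `Z` computes the Boolean function with variable set `W` whose satisfying
(total) assignments are described by the predicate `F`. -/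
def Computes [DecidableEq Var] (Z : NBP Var) (W : Finset Var)
    (F : Finset (Var × Bool) → Prop) : Prop :=
  Z.vars = W ∧ ∀ S, AssignsExactly W S → (F S ↔ ∃ p, Z.IsCompPath p ∧ pathLits p ⊆ S)

end NBP

/-- `parts` is the partition of the path `p` generated by the vertex set `X`:
`p` is cut into `|X| + 1` consecutive nonempty subpaths whose cut points are
exactly the vertices of `X`. -/
def GeneratesPartition {n : ℕ} (X : Finset (Fin n)) (p : List (NBPEdge Var n))
    (parts : List (List (NBPEdge Var n))) : Prop :=
  p = parts.flatten ∧ parts.length = X.card + 1 ∧ (∀ q ∈ parts, q ≠ []) ∧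
    (parts.dropLast.filterMap (fun q => q.getLast?.map NBPEdge.dst)).toFinset = X

/-- Variables of `Y₁` occur only on parts with even (0-based) index, i.e. odd-numbered
subpaths, and variables of `Y₂` only on parts with odd (0-based) index. -/
def OddEvenSplit [DecidableEq Var] {n : ℕ} (parts : List (List (NBPEdge Var n)))
    (Y₁ Y₂ : Finset Var) : Prop :=
  ∀ k : ℕ, ∀ x ∈ pathVars (parts.getD k []),
    (x ∈ Y₁ → k % 2 = 0) ∧ (x ∈ Y₂ → k % 2 = 1)

/-- The set `X` of vertices of `Z` (containing neither source nor sink) separates the two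
disjoint subsets `Y₁, Y₂` of `Vars(Z)`. -/
def NBP.Separates [DecidableEq Var] (Z : NBP Var) (X : Finset (Fin Z.n))
    (Y₁ Y₂ : Finset Var) : Prop :=
  Disjoint Y₁ Y₂ ∧ Y₁ ⊆ Z.vars ∧ Y₂ ⊆ Z.vars ∧ Z.source ∉ X ∧ Z.sink ∉ X ∧
  ∃ p parts, Z.IsCompPath p ∧ GeneratesPartition X p parts ∧
    (OddEvenSplit parts Y₁ Y₂ ∨ OddEvenSplit parts Y₂ Y₁)

/-! ### Rooted trees -/

/-- A finite rooted tree on (a subset of) the vertex type `V`, given by a parent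
function together with a depth function certifying acyclicity. -/
structure RootedTree (V : Type) [DecidableEq V] where
  verts : Finset V
  root : V
  parent : V → V
  depth : V → ℕ
  root_mem : root ∈ verts
  parent_mem : ∀ v ∈ verts, v ≠ root → parent v ∈ verts
  depth_root : depth root = 0
  depth_parent : ∀ v ∈ verts, v ≠ root → depth v = depth (parent v) + 1

namespace RootedTree

variable {V : Type} [DecidableEq V]

/-- The children of a vertex. -/
def children (T : RootedTree V) (u : V) : Finset V :=
  T.verts.filter (fun v => v ≠ T.root ∧ T.parent v = u)

/-- The leaves of the tree: vertices with no children. -/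
def leaves (T : RootedTree V) : Finset V :=
  T.verts.filter (fun v => T.children v = ∅)

/-- The vertex set of the path from the root to `v` (i.e. `v` and all its ancestors). -/
def pathVerts (T : RootedTree V) (v : V) : Finset V :=
  (Finset.range (T.depth v + 1)).image (fun k => T.parent^[k] v)

/-- The height of the tree: the largest number of vertices on a root-leaf path. -/
def height (T : RootedTree V) : ℕ :=
  (T.verts.sup T.depth) + 1

/-- Every vertex has at most two children. -/
def IsBinary (T : RootedTree V) : Prop :=
  ∀ u ∈ T.verts, (T.children u).card ≤ 2

/-- The tree is extended: none of its leaves has a sibling. -/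
def IsExtended (T : RootedTree V) : Prop :=
  ∀ v ∈ T.verts, v ≠ T.root → T.children v = ∅ → T.children (T.parent v) = {v}

/-- The edge set of the tree (as unordered pairs). -/
def edgeSet (T : RootedTree V) : Finset (Sym2 V) :=
  (T.verts.filter (fun v => v ≠ T.root)).image (fun v => s(v, T.parent v))

end RootedTree

/-! ### Binary-tree-based graphs and pseudoexpanders -/

/-- A binary-tree-based (BTB) graph on the vertex type `V`: an edge-disjoint union of
`m` extended binary rooted trees such that every leaf of one of the trees is a leaf of
exactly two of the trees, any two trees have at most one vertex in common (that vertex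
being a leaf of both), and the roots are pairwise distinct. -/
structure BTB (V : Type) [DecidableEq V] [Fintype V] where
  m : ℕ
  tree : Fin m → RootedTree V
  binary : ∀ i, (tree i).IsBinary
  extended : ∀ i, (tree i).IsExtended
  cover : ∀ v : V, ∃ i, v ∈ (tree i).verts
  edge_disjoint : ∀ i j, i ≠ j → Disjoint ((tree i).edgeSet) ((tree j).edgeSet)
  leaf_two : ∀ i, ∀ v ∈ (tree i).leaves,
    (Finset.univ.filter (fun j => v ∈ (tree j).leaves)).card = 2
  common_le_one : ∀ i j, i ≠ j → ∀ u v,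
    u ∈ (tree i).verts → u ∈ (tree j).verts →
    v ∈ (tree i).verts → v ∈ (tree j).verts → u = v
  common_leaf : ∀ i j, i ≠ j → ∀ v, v ∈ (tree i).verts → v ∈ (tree j).verts →
    v ∈ (tree i).leaves ∧ v ∈ (tree j).leaves
  roots_inj : Function.Injective (fun i => (tree i).root)

namespace BTB

variable {V : Type} [DecidableEq V] [Fintype V]

/-- `ℓ` is the common leaf of the (adjacent) trees `T_i` and `T_j`. -/
def IsCommonLeaf (H : BTB V) (i j : Fin H.m) (ℓ : V) : Prop :=
  i ≠ j ∧ ℓ ∈ (H.tree i).leaves ∧ ℓ ∈ (H.tree j).leaves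

/-- The trees `T_i` and `T_j` are adjacent (share a common leaf); equivalently,
`{t_i, t_j}` is a pseudoedge of `H`. -/
def Adjacent (H : BTB V) (i j : Fin H.m) : Prop :=
  ∃ ℓ, H.IsCommonLeaf i j ℓ

/-- The pseudodegree of the root `t_i`: the number of pseudoedges containing it. -/
noncomputable def pseudodegree (H : BTB V) (i : Fin H.m) : ℕ :=
  (Finset.univ.filter (fun j => H.Adjacent i j)).card

/-- The set of root vertices of `H`. -/
def rootSet (H : BTB V) : Finset V :=
  Finset.univ.image (fun i => (H.tree i).root)

/-- A pseudomatching: a set of pseudoedges (recorded as ordered pairs of root indices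
with `i < j`) no two of which share an end. -/
def IsPseudomatching (H : BTB V) (M : Finset (Fin H.m × Fin H.m)) : Prop :=
  (∀ e ∈ M, e.1 < e.2 ∧ H.Adjacent e.1 e.2) ∧
  ∀ e ∈ M, ∀ f ∈ M, e ≠ f → e.1 ≠ f.1 ∧ e.1 ≠ f.2 ∧ e.2 ≠ f.1 ∧ e.2 ≠ f.2

/-- A pseudomatching between the disjoint sets `U` and `W` of roots (given by their
indices): every pseudoedge of `M` has one end in `U` and the other in `W`. -/
def IsPseudomatchingBetween (H : BTB V) (M : Finset (Fin H.m × Fin H.m))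
    (U W : Finset (Fin H.m)) : Prop :=
  H.IsPseudomatching M ∧ ∀ e ∈ M, (e.1 ∈ U ∧ e.2 ∈ W) ∨ (e.1 ∈ W ∧ e.2 ∈ U)

/-- The set `⋃M` of root vertices matched by the pseudomatching `M`. -/
def matchingRoots (H : BTB V) (M : Finset (Fin H.m × Fin H.m)) : Finset V :=
  M.biUnion (fun e => {(H.tree e.1).root, (H.tree e.2).root})

/-- The vertex set `V(P_{i,j})` of the path connecting the roots `t_i` and `t_j`
through their common leaf `ℓ`. -/
def clauseVerts (H : BTB V) (i j : Fin H.m) (ℓ : V) : Finset V :=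
  (H.tree i).pathVerts ℓ ∪ (H.tree j).pathVerts ℓ

/-- `S` satisfies the monotone CNF `φ_H`. -/
def SatisfiesPhi (H : BTB V) (S : Finset (V × Bool)) : Prop :=
  ∀ i j ℓ, H.IsCommonLeaf i j ℓ → ∃ v ∈ H.clauseVerts i j ℓ, (v, true) ∈ S

/-- `S` falsifies no clause of `φ_H`. -/
def FalsifiesNoClause (H : BTB V) (S : Finset (V × Bool)) : Prop :=
  ∀ i j ℓ, H.IsCommonLeaf i j ℓ → ¬(∀ v ∈ H.clauseVerts i j ℓ, (v, false) ∈ S)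

/-- `H` is a pseudoexpander. -/
def IsPseudoexpander (H : BTB V) : Prop :=
  (∀ i, ((H.tree i).height : ℝ) ≤ Real.logb 2 H.m / 4.9 + 3) ∧
  ∀ U W : Finset (Fin H.m), Disjoint U W →
    (H.m : ℝ) ^ (0.999 : ℝ) ≤ U.card → (H.m : ℝ) ^ (0.999 : ℝ) ≤ W.card →
    ∃ M, H.IsPseudomatchingBetween M U W ∧ (H.m : ℝ) ^ (0.999 : ℝ) / 3 ≤ M.card

/-! #### The probability space on the satisfying assignments of `φ_H` -/

/-- The set `SAT(H)` of satisfying assignments of `φ_H` (total assignments of the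
variables `V(H)` satisfying every clause). -/
noncomputable def SATH (H : BTB V) : Finset (Finset (V × Bool)) :=
  Finset.univ.filter (fun S => AssignsExactly Finset.univ S ∧ H.SatisfiesPhi S)

/-- `Fix(S)`: the set of leaf variables `ℓ_{i,j}` occurring positively in `S` such that
all the other variables of the clause `C_{i,j}` occur negatively in `S`. -/
def Fix (H : BTB V) (S : Finset (V × Bool)) : Set V :=
  {ℓ | ∃ i j, H.IsCommonLeaf i j ℓ ∧ (ℓ, true) ∈ S ∧
      ∀ v ∈ H.clauseVerts i j ℓ, v ≠ ℓ → (v, false) ∈ S}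

/-- The probability weight of `S`: `(1/2) ^ |V(H) \ Fix(S)|`. -/
noncomputable def weight (H : BTB V) (S : Finset (V × Bool)) : ℝ :=
  (1 / 2 : ℝ) ^ (Fintype.card V - (H.Fix S).ncard)

/-- The probability of the event `E` in the probability space on `SAT(H)`. -/
noncomputable def Pr (H : BTB V) (E : Finset (V × Bool) → Prop) : ℝ :=
  ∑ S ∈ H.SATH.filter E, H.weight S

/-- `|S \ Fix(S)|`: the number of literals of `S` that are not fixed. -/
noncomputable def nonFixedCount (H : BTB V) (S : Finset (V × Bool)) : ℕ :=
  (S.filter (fun l => ¬(l.2 = true ∧ l.1 ∈ H.Fix S))).card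

/-- `v` and `w` are siblings (in one of the trees of `H`). -/
def Sibling (H : BTB V) (v w : V) : Prop :=
  ∃ k, v ∈ (H.tree k).verts ∧ w ∈ (H.tree k).verts ∧
    v ≠ (H.tree k).root ∧ w ≠ (H.tree k).root ∧ v ≠ w ∧
    (H.tree k).parent v = (H.tree k).parent w

/-- `S` respects the pseudoedge `{t_i, t_j}`: all non-root variables of `C_{i,j}` occur
negatively in `S` and the siblings of all internal variables of `C_{i,j}` occur
positively in `S`. -/
def Respects (H : BTB V) (i j : Fin H.m) (S : Finset (V × Bool)) : Prop :=
  ∃ ℓ, H.IsCommonLeaf i j ℓ ∧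
    (∀ v ∈ H.clauseVerts i j ℓ,
      v ≠ (H.tree i).root → v ≠ (H.tree j).root → (v, false) ∈ S) ∧
    (∀ v ∈ H.clauseVerts i j ℓ,
      v ≠ (H.tree i).root → v ≠ (H.tree j).root → v ≠ ℓ →
      ∀ w, H.Sibling v w → (w, true) ∈ S)

/-- `S` is `η`-comfortable w.r.t. the pseudomatching `M`: `S` falsifies no clause of
`φ_H` and respects at least `η·|M|` pseudoedges of `M`. -/
noncomputable def Comfortable (H : BTB V) (M : Finset (Fin H.m × Fin H.m)) (η : ℝ)
    (S : Finset (V × Bool)) : Prop :=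
  H.FalsifiesNoClause S ∧
    η * M.card ≤ ((M.filter (fun e => H.Respects e.1 e.2 S)).card : ℝ)

/-- `S` is a guarded set of literals. -/
def Guarded (H : BTB V) (S : Finset (V × Bool)) : Prop :=
  Consistent S ∧ ∀ i j ℓ, H.IsCommonLeaf i j ℓ →
    ((ℓ, true) ∉ S ∧ (ℓ, false) ∉ S) ∨
    (∃ v ∈ H.clauseVerts i j ℓ, v ≠ ℓ ∧ (v, true) ∈ S) ∨
    ((ℓ, true) ∈ S ∧ ∀ v ∈ H.clauseVerts i j ℓ, v ≠ ℓ → (v, false) ∈ S)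

/-! #### Matching CNFs and matching OR-CNFs -/

/-- The 'half clause' `C^{1/2}_{i,j}`: the positive clause on the vertices of the path
from `t_i` (if `side = true`) or from `t_j` (if `side = false`) to the common leaf `ℓ`. -/
def halfClause (H : BTB V) (i j : Fin H.m) (ℓ : V) (side : Bool) : Finset (V × Bool) :=
  (if side then (H.tree i).pathVerts ℓ else (H.tree j).pathVerts ℓ).image (fun v => (v, true))

/-- The matching CNF w.r.t. `M` determined by the side choice `c`: one half clause per
pseudoedge of `M`.  The formulas of `CNF(M)` are exactly the CNFs `matchingCNF H M c`. -/
def matchingCNF (H : BTB V) (M : Finset (Fin H.m × Fin H.m))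
    (c : Fin H.m × Fin H.m → Bool) : Set (Finset (V × Bool)) :=
  {C | ∃ e ∈ M, ∃ ℓ, H.IsCommonLeaf e.1 e.2 ℓ ∧ C = H.halfClause e.1 e.2 ℓ (c e)}

/-- A matching OR-CNF w.r.t. `M` is determined by a map `Ψ` assigning to each assignment
`S₀` of the variables `V(H) \ ⋃M` a matching CNF (given by its side choice `Ψ S₀`);
the formula is `⋁_{S₀} (Conj(S₀) ∧ matchingCNF H M (Ψ S₀))`.  `S` satisfies it iff for
(the) `S₀ ⊆ S`, `S` satisfies the corresponding matching CNF. -/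
def SatORCNF (H : BTB V) (M : Finset (Fin H.m × Fin H.m))
    (Ψ : Finset (V × Bool) → (Fin H.m × Fin H.m) → Bool) (S : Finset (V × Bool)) : Prop :=
  ∃ S₀, AssignsExactly (Finset.univ \ H.matchingRoots M) S₀ ∧ S₀ ⊆ S ∧
    SatCNF (H.matchingCNF M (Ψ S₀)) S

/-- `X` is an `(a, b)`-determining set for the NBP `Z` computing `φ_H`. -/
def IsDeterminingSet (H : BTB V) (Z : NBP V) (a b : ℝ) (X : Finset (Fin Z.n)) : Prop :=
  (X.card : ℝ) ≤ a ∧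
  ∃ M : Finset (Fin H.m × Fin H.m), H.IsPseudomatching M ∧ b ≤ (M.card : ℝ) ∧
    ∃ Ψ : Finset (V × Bool) → (Fin H.m × Fin H.m) → Bool,
      ∀ p, Z.IsCompPath p → X ⊆ pathVertices p → H.SatORCNF M Ψ (pathLits p)

end BTB

/-!
Probabilistic method. Let every vertex `u` of `Fin m` choose `k ≈ m^0.01` out-neighbours
`g (u, i)` at random. A fixed pair of `t`-sets `A, B` (`t ≈ m^0.999/4`) receives no edge from
`A` into `B` with probability `(1 - t/m)^(tk) ≤ exp (-t²k/m)`, which beats the at most `4^m`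
pairs, so some `g` links every such pair. Out-degrees are `k`; in-degrees are tamed by
discarding all edges into the heavy vertices hit at least `D ≈ m^0.2` times: there are at most
`mk/D ≪ m^0.999` of them, so they cannot exhaust a set of size `m^0.999/2`.
-/

section Counting

open Finset Fintype

variable {ι α κ β : Type*} [Fintype ι] [Fintype α] [Fintype κ] [Fintype β] [DecidableEq β]

theorem card_filter_forall_mem_mul_pow (S : Finset ι) (t : Finset β) :
    #{g : ι → β | ∀ x ∈ S, g x ∈ t} * card β ^ #S = #t ^ #S * card β ^ card ι := by
  have hpi : ({g : ι → β | ∀ x ∈ S, g x ∈ t} : Finset (ι → β)) =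
      piFinset fun x => if x ∈ S then t else univ := by
    ext g
    simp only [mem_filter, mem_univ, true_and, mem_piFinset]
    refine ⟨fun h x => ?_, fun h x hx => by simpa [hx] using h x⟩
    split_ifs with hx
    exacts [h x hx, mem_univ _]
  simp only [hpi, card_piFinset, apply_ite card, card_univ]
  rw [prod_ite, prod_const, prod_const, filter_mem_eq_inter, univ_inter, filter_not,
    filter_mem_eq_inter, univ_inter, ← compl_eq_univ_sdiff, ← card_compl_add_card S]
  ring

theorem card_filter_le_card_fiber_mul_le (g : ι → β) (D : ℕ) :
    #{v | D ≤ #{x | g x = v}} * D ≤ card ι :=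
  calc #{v | D ≤ #{x | g x = v}} * D
      = ∑ v ∈ {v | D ≤ #{x | g x = v}}, D := by rw [sum_const, smul_eq_mul]
    _ ≤ ∑ v ∈ {v | D ≤ #{x | g x = v}}, #{x | g x = v} :=
      sum_le_sum fun v hv => (mem_filter.1 hv).2
    _ ≤ ∑ v, #{x | g x = v} := sum_le_sum_of_subset (subset_univ _)
    _ = card ι := (card_eq_sum_card_fiberwise fun x _ => mem_univ (g x)).symm

theorem exists_forall_exists_apply_mem [Nonempty β] (a b : ℕ)
    (h : (card α).choose a * (card β).choose b * (card β - b) ^ (a * card κ) <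
      card β ^ (a * card κ)) :
    ∃ g : α × κ → β, ∀ A : Finset α, #A = a → ∀ B : Finset β, #B = b →
      ∃ x ∈ A, ∃ i, g (x, i) ∈ B := by
  set pairs := powersetCard a (univ : Finset α) ×ˢ powersetCard b (univ : Finset β)
  let avoiding : Finset α × Finset β → Finset (α × κ → β) :=
    fun AB => {g | ∀ x ∈ AB.1 ×ˢ univ, g x ∈ AB.2ᶜ}
  by_contra! hbad
  have hcover : (univ : Finset (α × κ → β)) ⊆ pairs.biUnion avoiding := by
    intro g _
    obtain ⟨A, hA, B, hB, hg⟩ := hbad g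
    refine mem_biUnion.2 ⟨(A, B), by simp [pairs, hA, hB], ?_⟩
    simp only [avoiding, mem_filter, mem_univ, true_and, mem_product, mem_compl, and_imp,
      Prod.forall]
    exact fun x i hx _ => hg x hx i
  have hcount : ∀ AB ∈ pairs, #(avoiding AB) * card β ^ (a * card κ) =
      (card β - b) ^ (a * card κ) * card β ^ card (α × κ) := by
    intro AB hAB
    obtain ⟨hA, hB⟩ := mem_product.1 hAB
    have key := card_filter_forall_mem_mul_pow (AB.1 ×ˢ (univ : Finset κ)) AB.2ᶜ
    have hcardA : #(AB.1 ×ˢ (univ : Finset κ)) = a * card κ := by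
      rw [card_product, card_univ, (mem_powersetCard.1 hA).2]
    have hcardB : #AB.2ᶜ = card β - b := by rw [card_compl, (mem_powersetCard.1 hB).2]
    rw [hcardA, hcardB] at key
    -- the two sides use different (equal) `Fintype` instances on `α × κ → β`
    convert key using 5
  have hpos : 0 < card β ^ card (α × κ) := pow_pos card_pos _
  have : card β ^ card (α × κ) * card β ^ (a * card κ) ≤
      (card α).choose a * (card β).choose b * (card β - b) ^ (a * card κ) *
        card β ^ card (α × κ) :=
    calc card β ^ card (α × κ) * card β ^ (a * card κ)
        = #(univ : Finset (α × κ → β)) * card β ^ (a * card κ) := by rw [card_univ, card_fun]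
      _ ≤ (∑ AB ∈ pairs, #(avoiding AB)) * card β ^ (a * card κ) :=
        Nat.mul_le_mul_right _ ((card_le_card hcover).trans card_biUnion_le)
      _ = ∑ AB ∈ pairs, (card β - b) ^ (a * card κ) * card β ^ card (α × κ) := by
        rw [sum_mul]; exact sum_congr rfl hcount
      _ = _ := by
        rw [sum_const, smul_eq_mul, card_product, card_powersetCard, card_powersetCard,
          card_univ, card_univ]
        ring
  nlinarith

end Counting

theorem choose_mul_choose_mul_pow_lt {n t k : ℕ} (ht : t ≤ n) (h : 2 * n ^ 2 < k * t ^ 2) :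
    n.choose t * n.choose t * (n - t) ^ (t * k) < n ^ (t * k) := by
  have hn : (0 : ℝ) < n := by
    rcases Nat.eq_zero_or_pos n with rfl | hn
    · simp_all
    · exact_mod_cast hn
  have hchoose : ((n.choose t * n.choose t : ℕ) : ℝ) ≤ Real.exp (2 * n) := by
    have h4 : (4 : ℝ) ≤ Real.exp 2 := by
      have := Real.add_one_le_exp 1
      rw [show (2 : ℝ) = 1 + 1 by norm_num, Real.exp_add]
      nlinarith
    calc ((n.choose t * n.choose t : ℕ) : ℝ) ≤ ((2 ^ n * 2 ^ n : ℕ) : ℝ) := by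
          gcongr <;> exact Nat.choose_le_two_pow n t
      _ = 4 ^ n := by push_cast; rw [← mul_pow]; norm_num
      _ ≤ Real.exp 2 ^ n := by gcongr
      _ = Real.exp (2 * n) := by rw [← Real.exp_nat_mul, mul_comm]
  have hsub : ((n - t : ℕ) : ℝ) ^ (t * k) ≤
      (n : ℝ) ^ (t * k) * Real.exp (-(t * (t * k) / n)) := by
    have hbase : ((n - t : ℕ) : ℝ) ≤ n * Real.exp (-(t / n)) := by
      have := Real.add_one_le_exp (-(t / n : ℝ))
      rw [Nat.cast_sub ht]
      calc (n : ℝ) - t = n * (-(t / n) + 1) := by field_simp; ring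
        _ ≤ n * Real.exp (-(t / n)) := by gcongr
    calc ((n - t : ℕ) : ℝ) ^ (t * k) ≤ (n * Real.exp (-(t / n))) ^ (t * k) := by gcongr
      _ = _ := by rw [mul_pow, ← Real.exp_nat_mul]; push_cast; ring_nf
  have hexp : Real.exp (2 * n) * Real.exp (-(t * (t * k) / n)) < 1 := by
    rw [← Real.exp_add, Real.exp_lt_one_iff, add_neg_lt_iff_lt_add, zero_add, lt_div_iff₀ hn]
    exact_mod_cast (show 2 * n * n < t * (t * k) by nlinarith)
  suffices ((n.choose t * n.choose t * (n - t) ^ (t * k) : ℕ) : ℝ) < ((n ^ (t * k) : ℕ) : ℝ) by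
    exact_mod_cast this
  calc ((n.choose t * n.choose t * (n - t) ^ (t * k) : ℕ) : ℝ)
      = ((n.choose t * n.choose t : ℕ) : ℝ) * ((n - t : ℕ) : ℝ) ^ (t * k) := by push_cast; ring
    _ ≤ Real.exp (2 * n) * ((n : ℝ) ^ (t * k) * Real.exp (-(t * (t * k) / n))) := by gcongr
    _ = (Real.exp (2 * n) * Real.exp (-(t * (t * k) / n))) * (n : ℝ) ^ (t * k) := by ring
    _ < 1 * (n : ℝ) ^ (t * k) := by gcongr
    _ = _ := by push_cast; ring

section PrunedGraph

open Finset Fintype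

variable {α κ : Type*} [Fintype α] [DecidableEq α] [Fintype κ]

def prunedGraph (g : α × κ → α) (D : ℕ) : SimpleGraph α :=
  SimpleGraph.fromRel fun u w => (∃ i, g (u, i) = w) ∧ #{x | g x = w} < D

theorem prunedGraph_adj {g : α × κ → α} {D : ℕ} {x : α} {i : κ} (hne : x ≠ g (x, i))
    (hD : #{y | g y = g (x, i)} < D) : (prunedGraph g D).Adj x (g (x, i)) :=
  (SimpleGraph.fromRel_adj _ _ _).2 ⟨hne, Or.inl ⟨⟨i, rfl⟩, hD⟩⟩

theorem ncard_adj_prunedGraph_le (g : α × κ → α) (D : ℕ) (v : α) :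
    {w | (prunedGraph g D).Adj v w}.ncard ≤ card κ + D := by
  set inNbrs : Finset α := if #{x | g x = v} < D then image Prod.fst {x | g x = v} else ∅
  have hsub : {w | (prunedGraph g D).Adj v w} ⊆ ↑((univ.image fun i => g (v, i)) ∪ inNbrs) := by
    rintro w ⟨-, ⟨⟨i, rfl⟩, -⟩ | ⟨⟨i, hi⟩, hD⟩⟩
    · simp
    · have hw : w ∈ inNbrs := by
        simp only [inNbrs, if_pos hD]
        exact mem_image.2 ⟨(w, i), by simp [hi], rfl⟩
      simp [hw]
  have hin : #inNbrs ≤ D := by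
    unfold inNbrs
    split_ifs with hD
    exacts [card_image_le.trans hD.le, by simp]
  calc _ ≤ #((univ.image fun i => g (v, i)) ∪ inNbrs) :=
        (Set.ncard_le_ncard hsub (finite_toSet _)).trans_eq (Set.ncard_coe_finset _)
    _ ≤ card κ + D := (card_union_le _ _).trans (add_le_add (card_image_le.trans (by simp)) hin)

theorem exists_adj_prunedGraph {g : α × κ → α} {D t : ℕ}
    (hg : ∀ A : Finset α, #A = t → ∀ B : Finset α, #B = t → ∃ x ∈ A, ∃ i, g (x, i) ∈ B)
    {U₁ U₂ : Finset α} (hU : Disjoint U₁ U₂) (h₁ : t ≤ #U₁) (hD : 0 < D)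
    (h₂ : t * D + card α * card κ ≤ #U₂ * D) :
    ∃ u ∈ U₁, ∃ v ∈ U₂, (prunedGraph g D).Adj u v := by
  have hmarkov := card_filter_le_card_fiber_mul_le g D
  rw [card_prod] at hmarkov
  set heavy : Finset α := {v | D ≤ #{x | g x = v}}
  have hheavy : t + #heavy ≤ #U₂ := Nat.le_of_mul_le_mul_right (by rw [add_mul]; omega) hD
  obtain ⟨A, hA, hAt⟩ := exists_subset_card_eq h₁
  obtain ⟨B, hB, hBt⟩ := exists_subset_card_eq (s := U₂ \ heavy) (n := t)
    (by have := le_card_sdiff heavy U₂; omega)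
  obtain ⟨x, hxA, i, hxB⟩ := hg A hAt B hBt
  obtain ⟨hxU₂, hlight⟩ := mem_sdiff.1 (hB hxB)
  refine ⟨x, hA hxA, g (x, i), hxU₂, prunedGraph_adj ?_ ?_⟩
  · exact fun h => disjoint_left.1 hU (hA hxA) (h ▸ hxU₂)
  · simpa [heavy] using hlight

end PrunedGraph

theorem exists_params_of_two_le {r : ℝ} (hr : 2 ≤ r) :
    ∃ k D t : ℕ, 0 < D ∧ (k + D : ℝ) ≤ r ^ 204 ∧ r ^ 1000 * k ≤ (r ^ 999 / 2 - t) * D ∧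
      (t : ℝ) ≤ r ^ 999 / 2 ∧ (t : ℝ) ≤ r ^ 1000 ∧ 2 * (r ^ 1000) ^ 2 < k * t ^ 2 := by
  have hr1 : 1 ≤ r := by linarith
  have hpow : ∀ p, (2 : ℝ) ^ p ≤ r ^ p := fun p => pow_le_pow_left₀ (by norm_num) hr p
  have h4 := hpow 4
  have h8 := hpow 8
  have h189 : (16 : ℝ) ≤ r ^ 189 := le_trans (by norm_num) (hpow 189)
  have h200 : (2 : ℝ) ≤ r ^ 200 := le_trans (by norm_num) (hpow 200)
  have h999 : (8 : ℝ) ≤ r ^ 999 :=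
    le_trans (by norm_num) ((hpow 3).trans (pow_le_pow_right₀ hr1 (by norm_num)))
  have h10 : r ^ 10 ≤ r ^ 200 := pow_le_pow_right₀ hr1 (by norm_num)
  have hr10 : 0 ≤ r ^ 10 := by positivity
  refine ⟨⌈r ^ 10⌉₊, ⌊r ^ 200⌋₊, ⌊r ^ 999 / 4⌋₊, Nat.floor_pos.2 (by linarith), ?_, ?_, ?_, ?_, ?_⟩
  · have hk := Nat.ceil_lt_add_one hr10
    have hD := Nat.floor_le (show 0 ≤ r ^ 200 by positivity)
    nlinarith
  · have hk := Nat.ceil_lt_add_one hr10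
    have hD := Nat.sub_one_lt_floor (r ^ 200)
    have ht := Nat.floor_le (show 0 ≤ r ^ 999 / 4 by positivity)
    have h1 : r ^ 1000 * ⌈r ^ 10⌉₊ ≤ 2 * r ^ 1010 :=
      calc r ^ 1000 * ⌈r ^ 10⌉₊ ≤ r ^ 1000 * (r ^ 10 + 1) := by gcongr
        _ ≤ 2 * r ^ 1010 := by
          ring_nf; linarith [pow_le_pow_right₀ hr1 (show 1000 ≤ 1010 by norm_num)]
    have h2 : r ^ 999 / 4 * (r ^ 200 / 2) ≤ (r ^ 999 / 2 - ⌊r ^ 999 / 4⌋₊) * ⌊r ^ 200⌋₊ := by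
      apply mul_le_mul <;> linarith
    nlinarith [pow_pos (by linarith : 0 < r) 1010]
  · have ht := Nat.floor_le (show 0 ≤ r ^ 999 / 4 by positivity)
    linarith
  · have ht := Nat.floor_le (show 0 ≤ r ^ 999 / 4 by positivity)
    nlinarith
  · have hk := Nat.le_ceil (r ^ 10)
    have ht := Nat.sub_one_lt_floor (r ^ 999 / 4)
    have ht2 : (r ^ 999 / 8) ^ 2 ≤ (⌊r ^ 999 / 4⌋₊ : ℝ) ^ 2 := by
      gcongr; linarith
    have : r ^ 10 * (r ^ 999 / 8) ^ 2 ≤ ⌈r ^ 10⌉₊ * (⌊r ^ 999 / 4⌋₊ : ℝ) ^ 2 := by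
      gcongr
    nlinarith [pow_pos (by linarith : 0 < r) 2000]

theorem exists_params {m : ℕ} (hm : 2 ^ 1000 ≤ m) :
    ∃ k D t : ℕ, 0 < D ∧ (k + D : ℝ) ≤ (m : ℝ) ^ ((1 : ℝ) / 4.9) ∧
      m * k ≤ ((m : ℝ) ^ (0.999 : ℝ) / 2 - t) * D ∧ (t : ℝ) ≤ (m : ℝ) ^ (0.999 : ℝ) / 2 ∧
      t ≤ m ∧ 2 * m ^ 2 < k * t ^ 2 := by
  -- with `r = m^(1/1000)` every exponent in sight becomes a natural power of `r`
  set r := (m : ℝ) ^ (1 / 1000 : ℝ)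
  have hr_pow (p : ℕ) : r ^ p = (m : ℝ) ^ ((p : ℝ) / 1000) := by
    rw [← Real.rpow_natCast, ← Real.rpow_mul (Nat.cast_nonneg m)]
    ring_nf
  have hr : 2 ≤ r :=
    calc (2 : ℝ) = ((2 : ℝ) ^ 1000) ^ (1 / 1000 : ℝ) := by
          rw [← Real.rpow_natCast, ← Real.rpow_mul (by norm_num)]
          norm_num
      _ ≤ r := Real.rpow_le_rpow (by positivity) (by exact_mod_cast hm) (by norm_num)
  obtain ⟨k, D, t, hD, hdeg, hheavy, ht, htm, hcut⟩ := exists_params_of_two_le hr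
  have hm_eq : (m : ℝ) = r ^ 1000 := by rw [hr_pow]; norm_num
  have h999 : (m : ℝ) ^ (0.999 : ℝ) = r ^ 999 := by rw [hr_pow]; norm_num
  have h204 : r ^ 204 ≤ (m : ℝ) ^ ((1 : ℝ) / 4.9) := by
    rw [hr_pow]
    exact Real.rpow_le_rpow_of_exponent_le (by exact_mod_cast Nat.one_le_two_pow.trans hm)
      (by norm_num)
  refine ⟨k, D, t, hD, hdeg.trans h204, by rw [h999, hm_eq]; exact hheavy, by rwa [h999], ?_, ?_⟩
  · exact_mod_cast hm_eq ▸ htm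
  · exact_mod_cast hm_eq ▸ hcut

/-- for all sufficiently large `m` there is a graph on `m` vertices of
maximum degree at most `m^(1/4.9)` in which any two disjoint vertex subsets of size at
least `m^0.999/2` are joined by an edge. -/
theorem statement_13 :
    ∃ c : ℕ, ∀ m : ℕ, c < m →
      ∃ G : SimpleGraph (Fin m),
        (∀ v : Fin m, ({w | G.Adj v w}.ncard : ℝ) ≤ (m : ℝ) ^ ((1 : ℝ) / 4.9)) ∧
        ∀ U₁ U₂ : Finset (Fin m), Disjoint U₁ U₂ →
          (m : ℝ) ^ (0.999 : ℝ) / 2 ≤ U₁.card → (m : ℝ) ^ (0.999 : ℝ) / 2 ≤ U₂.card →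
          ∃ u ∈ U₁, ∃ v ∈ U₂, G.Adj u v := by
  refine ⟨2 ^ 1000, fun m hm => ?_⟩
  obtain ⟨k, D, t, hD, hdeg, hheavy, ht, htm, hcut⟩ := exists_params hm.le
  have : Nonempty (Fin m) := ⟨⟨0, (Nat.zero_le _).trans_lt hm⟩⟩
  obtain ⟨g, hg⟩ := exists_forall_exists_apply_mem (α := Fin m) (κ := Fin k) (β := Fin m) t t
    (by simpa only [Fintype.card_fin] using choose_mul_choose_mul_pow_lt htm hcut)
  refine ⟨prunedGraph g D, fun v => ?_, fun U₁ U₂ hU h₁ h₂ =>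
    exists_adj_prunedGraph hg hU (by exact_mod_cast ht.trans h₁) hD ?_⟩
  · have hv := ncard_adj_prunedGraph_le g D v
    rw [Fintype.card_fin] at hv
    exact le_trans (by exact_mod_cast hv) hdeg
  · have hD' : (0 : ℝ) ≤ D := Nat.cast_nonneg D
    simp only [Fintype.card_fin]
    exact_mod_cast (by nlinarith : (t * D + m * k : ℝ) ≤ U₂.card * D)

end NBPPaper
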